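/- arXiv:1802.04922 — 4 statements merged into one kernel-verified Lean document; each statement's English description precedes it below -/
import Mathlib

section
/- Let u be a smooth function of x and λ₀ a constant. If a smooth nonvanishing function φ₀ satisfies φ₀_xxx + u φ₀_x + u_x φ₀ = λ₀ φ₀, then the function a = -2λ₀ φ₀ / (u φ₀ + φ₀_xx) satisfies the Bäcklund relation a_xx = -(1/4) a^3 + (3/2) a a_x - 2λ₀ - a u, provided u φ₀ + φ₀_xx is nonvanishing. -/
/-- Bosonic limit of the Darboux transformation data of the Sawada–Kotera equation:
if a nonvanishing `φ` solves the third-order spectral problem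
`φ_xxx + u φ_x + u_x φ = lam0 φ` and the denominator `u φ + φ_xx` never vanishes, then
`a = -2lam0 φ / (u φ + φ_xx)` satisfies the Bäcklund relation
`a_xx = -(1/4) a³ + (3/2) a a_x - 2lam0 - a u`. -/
theorem backlund_from_eigenfunction (u φ a : ℝ → ℝ) (lam0 : ℝ)
    (hu : ContDiff ℝ (⊤ : ℕ∞) u) (hφ : ContDiff ℝ (⊤ : ℕ∞) φ)
    (hφne : ∀ x, φ x ≠ 0)
    (hden : ∀ x, u x * φ x + deriv (deriv φ) x ≠ 0)
    (heig : ∀ x, deriv (deriv (deriv φ)) x + u x * deriv φ x + deriv u x * φ x = lam0 * φ x)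
    (ha : a = fun x => -2 * lam0 * φ x / (u x * φ x + deriv (deriv φ) x)) :
    ∀ x, deriv (deriv a) x
      = -(1/4) * (a x)^3 + (3/2) * a x * deriv a x - 2 * lam0 - a x * u x := by
  have hud : Differentiable ℝ u := hu.differentiable (by simp)
  have hφd : Differentiable ℝ φ := hφ.differentiable (by simp)
  have hφi : ContDiff ℝ ((⊤ : ℕ∞) : WithTop ℕ∞) φ := hφ.of_le (by simp)
  have hφ1 : ContDiff ℝ ((⊤ : ℕ∞) : WithTop ℕ∞) (deriv φ) := (contDiff_infty_iff_deriv.mp hφi).2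
  have hφ2 : ContDiff ℝ ((⊤ : ℕ∞) : WithTop ℕ∞) (deriv (deriv φ)) := (contDiff_infty_iff_deriv.mp hφ1).2
  have hφ1d : Differentiable ℝ (deriv φ) := hφ1.differentiable (by simp)
  have hφ2d : Differentiable ℝ (deriv (deriv φ)) := hφ2.differentiable (by simp)
  -- d = u φ + φ''
  have hdx : ∀ x, HasDerivAt (fun y => u y * φ y + deriv (deriv φ) y) (lam0 * φ x) x := by
    intro x
    have h := (((hud x).hasDerivAt.mul (hφd x).hasDerivAt).add (hφ2d x).hasDerivAt)
    simp only [Pi.mul_def, Pi.add_def, Pi.sub_def, Pi.div_def] at h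
    have e : deriv u x * φ x + u x * deriv φ x + deriv (deriv (deriv φ)) x = lam0 * φ x := by
      linarith [heig x]
    rw [e] at h
    exact h
  -- first derivative of a
  have hN : ∀ x, HasDerivAt a
      ((-2 * lam0 * deriv φ x * (u x * φ x + deriv (deriv φ) x)
        - -2 * lam0 * φ x * (lam0 * φ x)) / (u x * φ x + deriv (deriv φ) x) ^ 2) x := by
    intro x
    rw [ha]
    have h := (((hφd x).hasDerivAt.const_mul (-2 * lam0)).div (hdx x) (hden x))
    simp only [Pi.mul_def, Pi.add_def, Pi.sub_def, Pi.div_def] at h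
    convert h using 1
  have hA : deriv a = fun x =>
      (-2 * lam0 * deriv φ x * (u x * φ x + deriv (deriv φ) x)
        - -2 * lam0 * φ x * (lam0 * φ x)) / (u x * φ x + deriv (deriv φ) x) ^ 2 :=
    funext fun x => (hN x).deriv
  intro x
  -- second derivative of a
  have hNum : HasDerivAt (fun y => -2 * lam0 * deriv φ y * (u y * φ y + deriv (deriv φ) y)
        - -2 * lam0 * φ y * (lam0 * φ y))
      ((-2 * lam0 * deriv (deriv φ) x) * (u x * φ x + deriv (deriv φ) x)
        + (-2 * lam0 * deriv φ x) * (lam0 * φ x)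
        - ((-2 * lam0 * deriv φ x) * (lam0 * φ x) + (-2 * lam0 * φ x) * (lam0 * deriv φ x))) x := by
    have h := ((((hφ1d x).hasDerivAt.const_mul (-2 * lam0)).mul (hdx x)).sub
      (((hφd x).hasDerivAt.const_mul (-2 * lam0)).mul ((hφd x).hasDerivAt.const_mul lam0)))
    simp only [Pi.mul_def, Pi.add_def, Pi.sub_def, Pi.div_def] at h
    convert h using 1
  have hDen : HasDerivAt (fun y => (u y * φ y + deriv (deriv φ) y) ^ 2)
      (2 * (u x * φ x + deriv (deriv φ) x) ^ 1 * (lam0 * φ x)) x := (hdx x).pow 2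
  have hden2 : (u x * φ x + deriv (deriv φ) x) ^ 2 ≠ 0 := pow_ne_zero 2 (hden x)
  have h2 := (hNum.div hDen hden2).deriv
  simp only [Pi.mul_def, Pi.add_def, Pi.sub_def, Pi.div_def] at h2
  rw [hA]
  rw [h2, ha]
  have hd := hden x
  field_simp
  ring
end

section
/- With λ₀ = (i/(3√3)) k^3, u = 0, and φ₀ as the vacuum eigenfunction φ₀ = exp(p x + 9 p^5 t)(1 + exp(k x - k^5 t - 2πi/3 + c)), p = (-1/2 + (√3/6) i) k, the quantity a = -2λ₀ φ₀ / (u φ₀ + φ₀_xx) = -2λ₀ φ₀ / φ₀_xx equals -k( (√3/3) i + tanh η ), where η = (1/2)(k x - k^5 t + c). -/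
/-!
Write `θ = p x + 9 p⁵ t`, `η = (k x - k⁵ t + c) / 2` and `ω = exp (-2πi/3) = -1/2 - (√3/2) i`.
Then `φ₀ = e^θ (1 + ω e^{2η})` is a sum of two exponentials in `x`, so
`φ₀_xx = e^θ (p² + (p + k)² ω e^{2η})`, and the choice of `p` is exactly what makes
`(p + k)² ω = p²`. Hence `a = (-2λ₀ / p²) (1 + ω e^{2η}) / (1 + e^{2η})` with
`-2λ₀ / p² = k (1 - i/√3)`, a Möbius function of `e^{2η}` which is rewritten through
`tanh η = (e^{2η} - 1) / (e^{2η} + 1)`.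
-/

open Complex

noncomputable def dx (u : ℝ → ℝ → ℂ) : ℝ → ℝ → ℂ := fun x t => deriv (fun y => u y t) x

local notation "ω" => (-1 / 2 - Real.sqrt 3 / 2 * I : ℂ)

/-- No hypothesis is needed: where `cosh z = 0`, both sides are `0` by the `x / 0 = 0` convention. -/
theorem Complex.tanh_eq_exp_two_mul (z : ℂ) :
    tanh z = (exp (2 * z) - 1) / (exp (2 * z) + 1) := by
  have h2 : exp (2 * z) = exp z * exp z := by rw [two_mul, exp_add]
  rw [tanh_eq_sinh_div_cosh, sinh, cosh, h2, exp_neg,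
    ← mul_div_mul_left _ _ (mul_ne_zero two_ne_zero (exp_ne_zero z))]
  congr 1 <;> field_simp

theorem Complex.exp_neg_two_pi_I_div_three : exp (-(2 * Real.pi * I / 3)) = ω := by
  have harg : -(2 * Real.pi * I / 3) = ((-(Real.pi - Real.pi / 3) : ℝ) : ℂ) * I := by
    push_cast
    ring
  rw [harg, exp_mul_I, ← ofReal_cos, ← ofReal_sin, Real.cos_neg, Real.sin_neg, Real.cos_pi_sub,
    Real.sin_pi_sub, Real.cos_pi_div_three, Real.sin_pi_div_three]
  push_cast
  ring

theorem Complex.ofReal_sqrt_three_sq : ((Real.sqrt 3 : ℝ) : ℂ) ^ 2 = 3 := by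
  norm_cast
  simp

theorem Complex.sqrt_three_mul_I_sq : ((Real.sqrt 3 : ℝ) * I) ^ 2 = -3 := by
  rw [mul_pow, ofReal_sqrt_three_sq, I_sq]
  ring

theorem hasDerivAt_cexp_mul_ofReal_add (a b : ℂ) (y : ℝ) :
    HasDerivAt (fun x : ℝ => exp (a * x + b)) (a * exp (a * y + b)) y := by
  have h : HasDerivAt (fun x : ℝ => a * (x : ℂ) + b) a y := by
    simpa using (ofRealCLM.hasDerivAt (x := y)).const_mul a |>.add_const b
  simpa [mul_comm] using h.cexp

theorem dx_mul_exp_add_mul_exp (A a B b : ℂ) (f g : ℝ → ℂ) :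
    dx (fun (x : ℝ) t => A * exp (a * x + f t) + B * exp (b * x + g t))
      = fun (x : ℝ) t => A * a * exp (a * x + f t) + B * b * exp (b * x + g t) := by
  funext x t
  refine ((((hasDerivAt_cexp_mul_ofReal_add a (f t) x).const_mul A).add
    ((hasDerivAt_cexp_mul_ofReal_add b (g t) x).const_mul B)).deriv).trans ?_
  ring

theorem dx_dx_exp_mul_one_add_exp (a b : ℂ) (f g : ℝ → ℂ) :
    dx (dx (fun (x : ℝ) t => exp (a * x + f t) * (1 + exp (b * x + g t))))
      = fun (x : ℝ) t => exp (a * x + f t) * (a ^ 2 + (a + b) ^ 2 * exp (b * x + g t)) := by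
  have hsplit : ∀ (x : ℝ) t,
      exp ((a + b) * x + (f t + g t)) = exp (a * x + f t) * exp (b * x + g t) := fun x t => by
    rw [← exp_add]
    ring_nf
  have hsum : (fun (x : ℝ) t => exp (a * x + f t) * (1 + exp (b * x + g t)))
      = fun (x : ℝ) t => 1 * exp (a * x + f t) + 1 * exp ((a + b) * x + (f t + g t)) := by
    funext x t
    rw [hsplit]
    ring
  rw [hsum, dx_mul_exp_add_mul_exp, dx_mul_exp_add_mul_exp]
  funext x t
  rw [hsplit]
  ring

theorem add_sq_mul_omega_eq_sq {k p : ℂ} (hp : p = (-(1 / 2) + Real.sqrt 3 / 6 * I) * k) :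
    (p + k) ^ 2 * ω = p ^ 2 := by
  subst hp
  linear_combination (-(9 + Real.sqrt 3 * I) / 72 * k ^ 2) * sqrt_three_mul_I_sq

theorem neg_two_mul_div_sq_eq {k lam0 p : ℂ} (hlam : lam0 = I / (3 * Real.sqrt 3) * k ^ 3)
    (hp : p = (-(1 / 2) + Real.sqrt 3 / 6 * I) * k) (hp0 : p ≠ 0) :
    -2 * lam0 / p ^ 2 = k * (1 - Real.sqrt 3 / 3 * I) := by
  have hs : ((Real.sqrt 3 : ℝ) : ℂ) ≠ 0 := by exact_mod_cast (by positivity : Real.sqrt 3 ≠ 0)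
  rw [div_eq_iff (pow_ne_zero 2 hp0), hlam, hp]
  field_simp
  linear_combination (-(Real.sqrt 3 : ℂ) * k ^ 3 * (36 - 4 * Real.sqrt 3 * I)) * sqrt_three_mul_I_sq
    + 96 * I * k ^ 3 * ofReal_sqrt_three_sq

theorem one_sub_mul_one_add_omega_mul (E : ℂ) :
    (1 - Real.sqrt 3 / 3 * I) * (1 + ω * E)
      = (1 - Real.sqrt 3 / 3 * I) - (1 + Real.sqrt 3 / 3 * I) * E := by
  linear_combination (E / 6) * sqrt_three_mul_I_sq

/-- For the vacuum seed `u = 0` with eigenfunction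
`φ₀ = exp(p x + 9 p⁵ t)(1 + exp(k x - k⁵ t - 2πi/3 + c))`, `p = (-1/2 + (√3/6) i) k`,
and `λ₀ = (i/(3√3)) k³`, the Darboux variable `a = -2λ₀ φ₀ / (u φ₀ + φ₀_xx) = -2λ₀ φ₀ / φ₀_xx`
equals `-k((√3/3) i + tanh η)`, `η = (1/2)(k x - k⁵ t + c)`, wherever `φ₀_xx ≠ 0`. -/
theorem darboux_variable_vacuum (k : ℝ) (c lam0 p : ℂ) (u φ : ℝ → ℝ → ℂ)
    (hlam : lam0 = Complex.I / (3 * Real.sqrt 3) * (k : ℂ)^3)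
    (hp : p = (-(1/2) + (Real.sqrt 3 / 6) * Complex.I) * (k : ℂ))
    (hu : u = fun _ _ => 0)
    (hφ : φ = fun (x t : ℝ) => Complex.exp (p * (x : ℂ) + 9 * p^5 * (t : ℂ)) *
      (1 + Complex.exp ((k : ℂ) * (x : ℂ) - (k : ℂ)^5 * (t : ℂ)
        - 2 * (Real.pi : ℂ) * Complex.I / 3 + c))) :
    ∀ x t, dx (dx φ) x t ≠ 0 →
      -2 * lam0 * φ x t / (u x t * φ x t + dx (dx φ) x t)
        = -(k : ℂ) * ((Real.sqrt 3 / 3) * Complex.I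
            + Complex.tanh ((1/2) * ((k : ℂ) * (x : ℂ) - (k : ℂ)^5 * (t : ℂ) + c))) := by
  intro x t hne
  set θ := p * x + 9 * p ^ 5 * t
  set E := exp (2 * ((1 / 2) * ((k : ℂ) * x - (k : ℂ) ^ 5 * t + c))) with hE_def
  have hφ' : φ = fun (x t : ℝ) => exp (p * x + 9 * p ^ 5 * t)
      * (1 + exp (k * x + (-(k : ℂ) ^ 5 * t - 2 * Real.pi * I / 3 + c))) := by
    rw [hφ]
    funext x t
    ring_nf
  have hexp : exp (k * x + (-(k : ℂ) ^ 5 * t - 2 * Real.pi * I / 3 + c)) = ω * E := by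
    rw [← exp_neg_two_pi_I_div_three, ← exp_add]
    ring_nf
  have hφx : φ x t = exp θ * (1 + ω * E) := by rw [hφ', ← hexp]
  have hφxx : dx (dx φ) x t = exp θ * (p ^ 2 * (1 + E)) := by
    rw [hφ', dx_dx_exp_mul_one_add_exp]
    beta_reduce
    rw [hexp, ← mul_assoc, add_sq_mul_omega_eq_sq hp]
    ring
  obtain ⟨hp0, hE⟩ : p ≠ 0 ∧ 1 + E ≠ 0 := by simpa [hφxx, exp_ne_zero] using hne
  calc -2 * lam0 * φ x t / (u x t * φ x t + dx (dx φ) x t)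
      = -2 * lam0 / p ^ 2 * (1 + ω * E) / (1 + E) := by
        rw [hu, hφx, hφxx, zero_mul, zero_add]
        field_simp [exp_ne_zero θ]
    _ = k * ((1 - Real.sqrt 3 / 3 * I) - (1 + Real.sqrt 3 / 3 * I) * E) / (1 + E) := by
        rw [neg_two_mul_div_sq_eq hlam hp hp0, mul_assoc, one_sub_mul_one_add_omega_mul]
    _ = _ := by
        rw [tanh_eq_exp_two_mul, ← hE_def, add_comm E 1]
        field_simp
        ring
end

section
/- Let u be smooth and let φ satisfy φ_xxx + u φ_x + u_x φ = λ φ. Let a be a smooth function satisfying a_xx = -(1/4)a^3 + (3/2) a a_x - 2λ₀ - a u for a constant λ₀. Then φ₁ := a φ_xx + (1/2) a^2 φ_x + (λ + (1/4)a^3 - (1/2) a a_x + λ₀ + a u) φ satisfies φ₁_xxx + u₁ φ₁_x + u₁_x φ₁ = λ φ₁ with u₁ = u - 3 a_x. -/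
/-- Scalar (bosonic-limit) Darboux transformation for the third-order spectral problem
`φ_xxx + u φ_x + u_x φ = λ φ` of the Sawada–Kotera equation: if `a` satisfies the
Bäcklund relation `a_xx = -(1/4)a³ + (3/2) a a_x - 2λ₀ - a u`, then
`φ₁ = a φ_xx + (1/2)a² φ_x + (λ + (1/4)a³ - (1/2) a a_x + λ₀ + a u) φ` satisfies
the spectral problem with potential `u₁ = u - 3 a_x` and the same `λ`. -/
theorem scalar_darboux (u φ a : ℝ → ℝ) (lam lam0 : ℝ)
    (hu : ContDiff ℝ (⊤ : ℕ∞) u) (hφ : ContDiff ℝ (⊤ : ℕ∞) φ) (ha : ContDiff ℝ (⊤ : ℕ∞) a)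
    (heig : ∀ x, deriv (deriv (deriv φ)) x + u x * deriv φ x + deriv u x * φ x = lam * φ x)
    (hbt : ∀ x, deriv (deriv a) x
      = -(1/4) * (a x)^3 + (3/2) * a x * deriv a x - 2 * lam0 - a x * u x)
    (φ₁ u₁ : ℝ → ℝ)
    (hφ₁ : φ₁ = fun x => a x * deriv (deriv φ) x + (1/2) * (a x)^2 * deriv φ x
      + (lam + (1/4) * (a x)^3 - (1/2) * a x * deriv a x + lam0 + a x * u x) * φ x)
    (hu₁ : u₁ = fun x => u x - 3 * deriv a x) :
    ∀ x, deriv (deriv (deriv φ₁)) x + u₁ x * deriv φ₁ x + deriv u₁ x * φ₁ x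
      = lam * φ₁ x := by
  have hu' : ContDiff ℝ (⊤ : ℕ∞) u := hu.of_le (by simp)
  have hφ' : ContDiff ℝ (⊤ : ℕ∞) φ := hφ.of_le (by simp)
  have ha' : ContDiff ℝ (⊤ : ℕ∞) a := ha.of_le (by simp)
  have hsu1 : ContDiff ℝ (⊤ : ℕ∞) (deriv u) := (contDiff_infty_iff_deriv.mp hu').2
  have hsa1 : ContDiff ℝ (⊤ : ℕ∞) (deriv a) := (contDiff_infty_iff_deriv.mp ha').2
  have hsp1 : ContDiff ℝ (⊤ : ℕ∞) (deriv φ) := (contDiff_infty_iff_deriv.mp hφ').2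
  have hsp2 : ContDiff ℝ (⊤ : ℕ∞) (deriv (deriv φ)) := (contDiff_infty_iff_deriv.mp hsp1).2
  have hA : ∀ x : ℝ, HasDerivAt a (deriv a x) x := fun x =>
    (ha'.differentiable (by simp) x).hasDerivAt
  have hA1 : ∀ x : ℝ, HasDerivAt (deriv a) (deriv (deriv a) x) x := fun x =>
    (hsa1.differentiable (by simp) x).hasDerivAt
  have hU : ∀ x : ℝ, HasDerivAt u (deriv u x) x := fun x =>
    (hu'.differentiable (by simp) x).hasDerivAt
  have hU1 : ∀ x : ℝ, HasDerivAt (deriv u) (deriv (deriv u) x) x := fun x =>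
    (hsu1.differentiable (by simp) x).hasDerivAt
  have hP : ∀ x : ℝ, HasDerivAt φ (deriv φ x) x := fun x =>
    (hφ'.differentiable (by simp) x).hasDerivAt
  have hP1 : ∀ x : ℝ, HasDerivAt (deriv φ) (deriv (deriv φ) x) x := fun x =>
    (hsp1.differentiable (by simp) x).hasDerivAt
  have hP2 : ∀ x : ℝ, HasDerivAt (deriv (deriv φ)) (deriv (deriv (deriv φ)) x) x := fun x =>
    (hsp2.differentiable (by simp) x).hasDerivAt
  have h1 : deriv φ₁ = fun x => (1) * (deriv a x * deriv (deriv φ) x) + (1 * lam) * (deriv φ x) + (1 * lam0) * (deriv φ x) + (1/2) * (a x * a x * deriv (deriv φ) x) + (1/2) * (a x * deriv a x * deriv φ x) + (1 * lam) * (a x * φ x) + (1 * lam0) * (a x * φ x) + ((-1/2)) * (deriv a x * deriv a x * φ x) + (1) * (deriv a x * φ x * u x) + (1/4) * (a x * a x * a x * deriv φ x) + (1/2) * (a x * a x * φ x * u x) + (1/8) * (a x * a x * a x * a x * φ x) := by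
    funext x
    have e3 : deriv (deriv (deriv φ)) x
        = lam * φ x - u x * deriv φ x - deriv u x * φ x := by linarith [heig x]
    have H : HasDerivAt (fun x => a x * deriv (deriv φ) x + (1/2) * (a x)^2 * deriv φ x
        + (lam + (1/4) * (a x)^3 - (1/2) * a x * deriv a x + lam0 + a x * u x) * φ x) _ x :=
      (((hA x).mul (hP2 x)).add ((((hA x).pow 2).const_mul (1/2 : ℝ)).mul (hP1 x))).add
        (((((hasDerivAt_const x lam).add (((hA x).pow 3).const_mul (1/4 : ℝ))).sub
          (((hA x).const_mul (1/2 : ℝ)).mul (hA1 x))).add_const lam0).add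
            ((hA x).mul (hU x)) |>.mul (hP x))
    rw [hφ₁, H.deriv, e3, hbt x]
    push_cast
    simp only [Pi.add_apply, Pi.mul_apply, Pi.sub_apply, Pi.pow_apply]
    ring
  have h2 : deriv (fun x => (1) * (deriv a x * deriv (deriv φ) x) + (1 * lam) * (deriv φ x) + (1 * lam0) * (deriv φ x) + (1/2) * (a x * a x * deriv (deriv φ) x) + (1/2) * (a x * deriv a x * deriv φ x) + (1 * lam) * (a x * φ x) + (1 * lam0) * (a x * φ x) + ((-1/2)) * (deriv a x * deriv a x * φ x) + (1) * (deriv a x * φ x * u x) + (1/4) * (a x * a x * a x * deriv φ x) + (1/2) * (a x * a x * φ x * u x) + (1/8) * (a x * a x * a x * a x * φ x)) = fun x => (1 * lam) * (deriv (deriv φ) x) + ((-1) * lam0) * (deriv (deriv φ) x) + (3) * (a x * deriv a x * deriv (deriv φ) x) + (1 * lam) * (a x * deriv φ x) + ((-1)) * (a x * deriv (deriv φ) x * u x) + (2 * lam) * (deriv a x * φ x) + (3 * lam0) * (deriv a x * φ x) + ((-2) * lam0) * (φ x * u x) + (3/2) * (a x * a x * deriv a x * deriv φ x) + (1/2 *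 lam) * (a x * a x * φ x) + ((-1/2)) * (a x * a x * deriv φ x * u x) + ((-3/2)) * (a x * deriv a x * deriv a x * φ x) + (7/2) * (a x * deriv a x * φ x * u x) + ((-1)) * (a x * φ x * u x * u x) + (3/4) * (a x * a x * a x * deriv a x * φ x) + ((-1/4)) * (a x * a x * a x * φ x * u x) := by
    funext x
    have e3 : deriv (deriv (deriv φ)) x
        = lam * φ x - u x * deriv φ x - deriv u x * φ x := by linarith [heig x]
    have H : HasDerivAt (fun x => (1) * (deriv a x * deriv (deriv φ) x) + (1 * lam) * (deriv φ x) + (1 * lam0) * (deriv φ x) + (1/2) * (a x * a x * deriv (deriv φ) x) + (1/2) * (a x * deriv a x * deriv φ x) + (1 * lam) * (a x * φ x) + (1 * lam0) * (a x * φ x) + ((-1/2)) * (deriv a x * deriv a x * φ x) + (1) * (deriv a x * φ x * u x) + (1/4) * (a x * a x * a x * deriv φ x) + (1/2) * (a x * a x * φ x * u x) + (1/8) * (a x * a x * a x * a x * φ x))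
        ((1) * ((deriv (deriv a) x) * deriv (deriv φ) x + deriv a x * deriv (deriv (deriv φ)) x) + (1 * lam) * (deriv (deriv φ) x) + (1 * lam0) * (deriv (deriv φ) x) + (1/2) * (((deriv a x) * a x + a x * deriv a x) * deriv (deriv φ) x + a x * a x * deriv (deriv (deriv φ)) x) + (1/2) * (((deriv a x) * deriv a x + a x * deriv (deriv a) x) * deriv φ x + a x * deriv a x * deriv (deriv φ) x) + (1 * lam) * ((deriv a x) * φ x + a x * deriv φ x) + (1 * lam0) * ((deriv a x) * φ x + a x * deriv φ x) + ((-1/2)) * (((deriv (deriv a) x) * deriv a x + deriv a x * deriv (deriv a) x) * φ x + deriv a x * deriv a x * deriv φ x) + (1) * (((deriv (deriv a) x) * φ x + deriv a x * deriv φ x) * u x + deriv a x * φ x * deriv u x) + (1/4) * ((((deriv a x) * a x + a x * deriv a x) * a x + a x * a x * deriv a x) * deriv φ x + a x * a x * a x * deriv (deriv φ) x) + (1/2) * ((((deriv a x) * a x + a x * deriv a x) * φ x + a x * a x * deriv φ x) * u x + a x * a x * φ x * deriv u x) + (1/8) * (((((deriv a x) * a x + a x * deriv a x) * a x + a x * a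 x * deriv a x) * a x + a x * a x * a x * deriv a x) * φ x + a x * a x * a x * a x * deriv φ x)) x := ((((((((((((HasDerivAt.const_mul (1) ((hA1 x).mul (hP2 x))).add (HasDerivAt.const_mul (1 * lam) (hP1 x))).add (HasDerivAt.const_mul (1 * lam0) (hP1 x))).add (HasDerivAt.const_mul (1/2) (((hA x).mul (hA x)).mul (hP2 x)))).add (HasDerivAt.const_mul (1/2) (((hA x).mul (hA1 x)).mul (hP1 x)))).add (HasDerivAt.const_mul (1 * lam) ((hA x).mul (hP x)))).add (HasDerivAt.const_mul (1 * lam0) ((hA x).mul (hP x)))).add (HasDerivAt.const_mul ((-1/2)) (((hA1 x).mul (hA1 x)).mul (hP x)))).add (HasDerivAt.const_mul (1) (((hA1 x).mul (hP x)).mul (hU x)))).add (HasDerivAt.const_mul (1/4) ((((hA x).mul (hA x)).mul (hA x)).mul (hP1 x)))).add (HasDerivAt.const_mul (1/2) ((((hA x).mul (hA x)).mul (hP x)).mul (hU x)))).add (HasDerivAt.const_mul (1/8) (((((hA x).mul (hA x)).mul (hA x)).mul (hA x)).mul (hP x))))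
    rw [H.deriv, e3, hbt x]
    ring
  intro x
  have e3 : deriv (deriv (deriv φ)) x
      = lam * φ x - u x * deriv φ x - deriv u x * φ x := by linarith [heig x]
  have H : HasDerivAt (fun x => (1 * lam) * (deriv (deriv φ) x) + ((-1) * lam0) * (deriv (deriv φ) x) + (3) * (a x * deriv a x * deriv (deriv φ) x) + (1 * lam) * (a x * deriv φ x) + ((-1)) * (a x * deriv (deriv φ) x * u x) + (2 * lam) * (deriv a x * φ x) + (3 * lam0) * (deriv a x * φ x) + ((-2) * lam0) * (φ x * u x) + (3/2) * (a x * a x * deriv a x * deriv φ x) + (1/2 * lam) * (a x * a x * φ x) + ((-1/2)) * (a x * a x * deriv φ x * u x) + ((-3/2)) * (a x * deriv a x * deriv a x * φ x) + (7/2) * (a x * deriv a x * φ x * u x) + ((-1)) * (a x * φ x * u x * u x) + (3/4) * (a x * a x * a x * deriv a x * φ x) + ((-1/4)) * (a x * a x * a x * φ x * u x))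
      ((1 * lam) * (deriv (deriv (deriv φ)) x) + ((-1) * lam0) * (deriv (deriv (deriv φ)) x) + (3) * (((deriv a x) * deriv a x + a x * deriv (deriv a) x) * deriv (deriv φ) x + a x * deriv a x * deriv (deriv (deriv φ)) x) + (1 * lam) * ((deriv a x) * deriv φ x + a x * deriv (deriv φ) x) + ((-1)) * (((deriv a x) * deriv (deriv φ) x + a x * deriv (deriv (deriv φ)) x) * u x + a x * deriv (deriv φ) x * deriv u x) + (2 * lam) * ((deriv (deriv a) x) * φ x + deriv a x * deriv φ x) + (3 * lam0) * ((deriv (deriv a) x) * φ x + deriv a x * deriv φ x) + ((-2) * lam0) * ((deriv φ x) * u x + φ x * deriv u x) + (3/2) * ((((deriv a x) * a x + a x * deriv a x) * deriv a x + a x * a x * deriv (deriv a) x) * deriv φ x + a x * a x * deriv a x * deriv (deriv φ) x) + (1/2 * lam) * (((deriv a x) * a x + a x * deriv a x) * φ x + a x * a x * deriv φ x) + ((-1/2)) * ((((deriv a x) * a x + a x * deriv a x) * deriv φ x + a x * a x * deriv (deriv φ) x) * u x + a x * a x * deriv φ x * deriv u x) + ((-3/2)) * ((((deriv a x) * deriv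 a x + a x * deriv (deriv a) x) * deriv a x + a x * deriv a x * deriv (deriv a) x) * φ x + a x * deriv a x * deriv a x * deriv φ x) + (7/2) * ((((deriv a x) * deriv a x + a x * deriv (deriv a) x) * φ x + a x * deriv a x * deriv φ x) * u x + a x * deriv a x * φ x * deriv u x) + ((-1)) * ((((deriv a x) * φ x + a x * deriv φ x) * u x + a x * φ x * deriv u x) * u x + a x * φ x * u x * deriv u x) + (3/4) * (((((deriv a x) * a x + a x * deriv a x) * a x + a x * a x * deriv a x) * deriv a x + a x * a x * a x * deriv (deriv a) x) * φ x + a x * a x * a x * deriv a x * deriv φ x) + ((-1/4)) * (((((deriv a x) * a x + a x * deriv a x) * a x + a x * a x * deriv a x) * φ x + a x * a x * a x * deriv φ x) * u x + a x * a x * a x * φ x * deriv u x)) x := ((((((((((((((((HasDerivAt.const_mul (1 * lam) (hP2 x)).add (HasDerivAt.const_mul ((-1) * lam0) (hP2 x))).add (HasDerivAt.const_mul (3) (((hA x).mul (hA1 x)).mul (hP2 x)))).add (HasDerivAt.const_mul (1 * lam) ((hA x).mul (hP1 x)))).add (HasDerivAt.const_mul ((-1)) (((hA x).mul (hP2 x)).mul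 (hU x)))).add (HasDerivAt.const_mul (2 * lam) ((hA1 x).mul (hP x)))).add (HasDerivAt.const_mul (3 * lam0) ((hA1 x).mul (hP x)))).add (HasDerivAt.const_mul ((-2) * lam0) ((hP x).mul (hU x)))).add (HasDerivAt.const_mul (3/2) ((((hA x).mul (hA x)).mul (hA1 x)).mul (hP1 x)))).add (HasDerivAt.const_mul (1/2 * lam) (((hA x).mul (hA x)).mul (hP x)))).add (HasDerivAt.const_mul ((-1/2)) ((((hA x).mul (hA x)).mul (hP1 x)).mul (hU x)))).add (HasDerivAt.const_mul ((-3/2)) ((((hA x).mul (hA1 x)).mul (hA1 x)).mul (hP x)))).add (HasDerivAt.const_mul (7/2) ((((hA x).mul (hA1 x)).mul (hP x)).mul (hU x)))).add (HasDerivAt.const_mul ((-1)) ((((hA x).mul (hP x)).mul (hU x)).mul (hU x)))).add (HasDerivAt.const_mul (3/4) (((((hA x).mul (hA x)).mul (hA x)).mul (hA1 x)).mul (hP x)))).add (HasDerivAt.const_mul ((-1/4)) (((((hA x).mul (hA x)).mul (hA x)).mul (hP x)).mul (hU x))))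
  have Hu : HasDerivAt (fun x => u x - 3 * deriv a x)
      (deriv u x - 3 * deriv (deriv a) x) x := (hU x).sub ((hA1 x).const_mul 3)
  simp only [h1, h2]
  simp only [hu₁, hφ₁]
  rw [H.deriv, Hu.deriv, e3, hbt x]
  ring
end

section
/- Let a(x,t) = -k( (√3/3) i + tanh η ) with η = (1/2)(k x - k^5 t + c), k real, c real. Then u₁ := -3 a_x = (3/2) k^2 sech^2 η is real-valued, and a satisfies a_xx = -(1/4)a^3 + (3/2) a a_x - 2λ₀ with λ₀ = (i/(3√3)) k^3. -/
open Complex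

/-!
Write `T = tanh η` and `z = (√3/3) i`. Since `∂ₓη = k/2` and `tanh' = 1 - tanh²`,
`a_x = -(k²/2)(1 - T²) = -(k²/2) sech² η`, which gives `u₁`, and `a_xx = (k³/2) T (1 - T²)`.
With `λ₀ = -(z k)³`, the Bäcklund relation then becomes a polynomial identity in `T`
whose defect is `(k³/4)(T + 3z)(3z² + 1)`, which vanishes because `z² = -1/3`.
-/

namespace Real

theorem one_sub_tanh_sq (x : ℝ) : 1 - tanh x ^ 2 = (1 / cosh x) ^ 2 := by
  have hcosh := (cosh_pos x).ne'
  rw [tanh_eq_sinh_div_cosh]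
  field_simp
  linear_combination cosh_sq_sub_sinh_sq x

theorem hasDerivAt_tanh (x : ℝ) : HasDerivAt tanh (1 - tanh x ^ 2) x := by
  have h := (hasDerivAt_sinh x).div (hasDerivAt_cosh x) (cosh_pos x).ne'
  rw [show tanh = sinh / cosh from funext tanh_eq_sinh_div_cosh]
  refine h.congr_deriv ?_
  rw [Pi.div_apply]
  field_simp

end Real

theorem HasDerivAt.tanh {f : ℝ → ℝ} {f' x : ℝ} (hf : HasDerivAt f f' x) :
    HasDerivAt (fun y => Real.tanh (f y)) ((1 - Real.tanh (f x) ^ 2) * f') x :=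
  (Real.hasDerivAt_tanh (f x)).comp x hf

section Kink

variable {k : ℝ} {z : ℂ} {φ : ℝ → ℝ → ℝ}

theorem dx_kink (hφ : ∀ x t, HasDerivAt (fun y => φ y t) (k / 2) x) (x t : ℝ) :
    dx (fun x t => -(k : ℂ) * (z + Complex.tanh (φ x t))) x t
      = -((k : ℂ) ^ 2 / 2) * (1 - Complex.tanh (φ x t) ^ 2) := by
  have h := ((hφ x t).tanh.ofReal_comp.const_add z).const_mul (-(k : ℂ))
  simp only [dx, ← ofReal_tanh]
  rw [h.deriv]
  push_cast
  ring

theorem dx_dx_kink (hφ : ∀ x t, HasDerivAt (fun y => φ y t) (k / 2) x) (x t : ℝ) :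
    dx (dx (fun x t => -(k : ℂ) * (z + Complex.tanh (φ x t)))) x t
      = (k : ℂ) ^ 3 / 2 * Complex.tanh (φ x t) * (1 - Complex.tanh (φ x t) ^ 2) := by
  have h := (((hφ x t).tanh.ofReal_comp.fun_pow 2).const_sub 1).const_mul (-((k : ℂ) ^ 2 / 2))
  rw [dx, funext (dx_kink hφ · t)]
  simp only [← ofReal_tanh]
  rw [h.deriv]
  push_cast
  ring

end Kink

theorem kink_backlund_identity {k z T : ℂ} (hz : 3 * z ^ 2 = -1) :
    k ^ 3 / 2 * T * (1 - T ^ 2)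
      = -(1 / 4) * (-k * (z + T)) ^ 3 + (3 / 2) * (-k * (z + T)) * (-(k ^ 2 / 2) * (1 - T ^ 2))
        - 2 * (-(z * k) ^ 3) := by
  linear_combination (-(3 / 4) * z * k ^ 3 - k ^ 3 * T / 4) * hz

/-- For the complex Darboux variable `a = -k((√3/3) i + tanh η)` with
`η = (1/2)(k x - k⁵ t + c)`, the quantity `u₁ = -3 a_x` equals the real 1-soliton
`(3/2) k² sech² η`, and `a` satisfies the vacuum Bäcklund relation
`a_xx = -(1/4)a³ + (3/2) a a_x - 2λ₀` with `λ₀ = (i/(3√3)) k³`. -/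
theorem darboux_vacuum_soliton (k c : ℝ) (lam0 : ℂ) (a : ℝ → ℝ → ℂ)
    (hlam : lam0 = Complex.I / (3 * Real.sqrt 3) * (k : ℂ)^3)
    (ha : a = fun (x t : ℝ) => -(k : ℂ) * ((Real.sqrt 3 / 3) * Complex.I
      + Complex.tanh (((1/2) * (k*x - k^5*t + c) : ℝ) : ℂ))) :
    (∀ x t, -3 * dx a x t
        = (((3/2) * k^2 * (1 / Real.cosh ((1/2) * (k*x - k^5*t + c)))^2 : ℝ) : ℂ)) ∧
    (∀ x t, dx (dx a) x t
        = -(1/4) * (a x t)^3 + (3/2) * a x t * dx a x t - 2 * lam0) := by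
  have hφ : ∀ x t : ℝ, HasDerivAt (fun y => (1/2) * (k*y - k^5*t + c)) (k / 2) x := fun x t =>
    ((((hasDerivAt_id x).const_mul k).sub_const (k^5*t)).add_const c).const_mul (1/2 : ℝ)
      |>.congr_deriv (by ring)
  have hsqrt : ((Real.sqrt 3 : ℝ) : ℂ) ^ 2 = 3 := by
    exact_mod_cast Real.sq_sqrt (by norm_num : (0 : ℝ) ≤ 3)
  have hz : 3 * ((Real.sqrt 3 / 3 : ℂ) * I) ^ 2 = -1 := by
    linear_combination (I ^ 2 / 3) * hsqrt + I_sq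
  have hlam' : lam0 = -((Real.sqrt 3 / 3 * I) * k) ^ 3 := by
    have hsqrt_ne : ((Real.sqrt 3 : ℝ) : ℂ) ≠ 0 := by
      exact_mod_cast (Real.sqrt_pos.2 (by norm_num : (0 : ℝ) < 3)).ne'
    rw [hlam]
    field_simp
    linear_combination (k : ℂ) ^ 3 * I ^ 2 * (((Real.sqrt 3 : ℝ) : ℂ) ^ 2 + 3) * hsqrt
      + 9 * (k : ℂ) ^ 3 * I_sq
  subst ha hlam'
  refine ⟨fun x t => ?_, fun x t => ?_⟩
  · rw [dx_kink hφ, ← ofReal_tanh, ← Real.one_sub_tanh_sq]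
    push_cast
    ring
  · rw [dx_dx_kink hφ, dx_kink hφ]
    exact kink_backlund_identity hz
end
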